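/- Let P be the Z-graded chain complex with P_n = k[ε]/(ε²) (k = Z/p) in every degree and differential multiplication by ε. Then the endomorphism dga End(P) is quasi-isomorphic to the graded ring Z/p[x, y]/(xy − 1) with |x| = 1, |y| = −1 and zero differential. In particular H_n(End(P)) ≅ Z/p for all n. -/

import Mathlib

/-! `P` is the complete resolution of `k = Z/p` over `Rε = k[ε]/(ε²)` with `Rε` in every
degree and differential multiplication by `ε`.  We model `Rε` as `DualNumber (ZMod p)`.
The degree-`n` part of `End(P) = Hom(P, P)` is `∏_{i ∈ ℤ} Rε`.  The dga
`Aε = Z/p[x, y]/(xy − 1)` (trivial differential, `|x| = 1`, `|y| = −1`) has degree-`n`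
part `Z/p`, spanned by `x^n`. -/

/-- Degree-`n` component of `End(P)`. -/
abbrev EndPeps (p : ℕ) (_ : ℤ) := ℤ → DualNumber (ZMod p)

/-- Composition product on `End(P)`: for `f` of degree `m` and `g` of degree `n`,
`(f ∘ g)_i = f_{i+n} g_i`. -/
def mulEps (p : ℕ) (n : ℤ) (f g : ℤ → DualNumber (ZMod p)) : ℤ → DualNumber (ZMod p) :=
  fun i => f (i + n) * g i

/-- The differential of `End(P)` out of degree `n`:
`(df)_k = ε (f_k + (−1)^{n+1} f_{k−1})`. -/
def endEpsD (p : ℕ) (n : ℤ) : EndPeps p n →+ EndPeps p (n - 1) :=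
  AddMonoidHom.mk'
    (fun f k => DualNumber.eps *
      (f k + ((Int.negOnePow (n + 1) : ℤ) : DualNumber (ZMod p)) * f (k - 1)))
    (by intro f g; funext k; simp only [Pi.add_apply]; ring)

/-- The element `X ∈ End(P)₁`, `X_i = (−1)^i`. -/
def XeE (p : ℕ) : ℤ → DualNumber (ZMod p) :=
  fun i => ((Int.negOnePow i : ℤ) : DualNumber (ZMod p))

/-- The element `Y ∈ End(P)₋₁`, `Y_i = (−1)^{i+1}`. -/
def YeE (p : ℕ) : ℤ → DualNumber (ZMod p) :=
  fun i => ((Int.negOnePow (i + 1) : ℤ) : DualNumber (ZMod p))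

/-! A degree-`n` cycle `f` of `End(P)` has first components obeying `f_k = (−1)^n f_{k−1}`, so
modulo boundaries it is determined by `f_0`: the boundaries are exactly the sequences with
values in `ε Rε`, because a first-order recurrence `G_k + u G_{k−1} = h_k` with `u` a unit can be
solved on all of `ℤ`. Hence the class of `f` is represented by a unique multiple of `X^n`. -/

section Recurrence

variable {A : Type*}

theorem Int.exists_sub_sub_one_eq {M : Type*} [AddCommGroup M] (φ : ℤ → M) :
    ∃ F : ℤ → M, ∀ k, F k - F (k - 1) = φ k := by
  refine ⟨fun k => if 0 ≤ k then ∑ j ∈ Finset.range k.toNat, φ (j + 1)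
    else -∑ j ∈ Finset.range (-k).toNat, φ (-j), fun k => ?_⟩
  rcases le_or_gt k 0 with hk | hk
  · obtain ⟨n, rfl⟩ : ∃ n : ℕ, k = -n := ⟨(-k).toNat, by omega⟩
    rcases n with _ | n
    · simp
    · have h1 : ¬ (0 ≤ -((n + 1 : ℕ) : ℤ)) := by omega
      have h2 : ¬ (0 ≤ -((n + 1 : ℕ) : ℤ) - 1) := by omega
      have h3 : (-(-((n + 1 : ℕ) : ℤ) - 1)).toNat = n + 1 + 1 := by omega
      simp only [if_neg h1, if_neg h2, h3, neg_neg, Int.toNat_natCast,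
        Finset.sum_range_succ (n := n + 1)]
      abel
  · obtain ⟨n, rfl⟩ : ∃ n : ℕ, k = n + 1 := ⟨(k - 1).toNat, by omega⟩
    simp [Finset.sum_range_succ, hk.le]

theorem exists_add_mul_sub_one_eq [CommRing A] {u : A} (hu : IsUnit u) (h : ℤ → A) :
    ∃ G : ℤ → A, ∀ k, G k + u * G (k - 1) = h k := by
  obtain ⟨u, rfl⟩ := hu
  -- substituting `G k = (-u)^k F k` turns the recurrence into `F k - F (k - 1) = (-u)^{-k} h k`
  obtain ⟨F, hF⟩ := Int.exists_sub_sub_one_eq fun k => ((-u) ^ k)⁻¹.val * h k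
  refine ⟨fun k => ((-u) ^ k).val * F k, fun k => ?_⟩
  have hw : u.val * ((-u) ^ (k - 1)).val = -((-u) ^ k).val := by
    rw [← sub_add_cancel k 1, zpow_add_one, add_sub_cancel_right, Units.val_mul, Units.val_neg]
    ring
  rw [← mul_assoc, hw, neg_mul, ← sub_eq_add_neg, ← mul_sub, hF, Units.mul_inv_cancel_left]

theorem isUnit_intCast_units [Ring A] (u : ℤˣ) : IsUnit ((u : ℤ) : A) :=
  u.isUnit.map (Int.castRingHom A)

theorem eq_zero_of_add_mul_sub_one_eq_zero [Ring A] {u : A} (hu : IsUnit u) {G : ℤ → A}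
    (hG : ∀ k, G k + u * G (k - 1) = 0) (h0 : G 0 = 0) (k : ℤ) : G k = 0 := by
  induction k using Int.induction_on with
  | zero => exact h0
  | succ i ih => simpa [ih] using hG (i + 1)
  | pred i ih =>
    have := hG (-i)
    rwa [ih, zero_add, hu.mul_right_eq_zero] at this

end Recurrence

theorem AddMonoidHom.nonempty_homology_addEquiv {A B C D : Type*} [AddCommGroup A]
    [AddCommGroup B] [AddCommGroup C] [AddCommGroup D] (d : B →+ C) (d' : D →+ B) (ψ : A →+ B)
    (hcycle : ∀ a, d (ψ a) = 0) (hsurj : ∀ b, d b = 0 → ∃ a, ∃ g, d' g = b - ψ a)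
    (hinj : ∀ a, (∃ g, d' g = ψ a) → a = 0) :
    Nonempty ((d.ker ⧸ d'.range.addSubgroupOf d.ker) ≃+ A) := by
  let φ : A →+ d.ker ⧸ d'.range.addSubgroupOf d.ker :=
    (QuotientAddGroup.mk' _).comp (ψ.codRestrict d.ker hcycle)
  refine ⟨(AddEquiv.ofBijective φ ⟨(injective_iff_map_eq_zero φ).mpr fun a ha => ?_, ?_⟩).symm⟩
  · exact hinj a (AddSubgroup.mem_addSubgroupOf.mp ((QuotientAddGroup.eq_zero_iff _).mp ha))
  · intro q
    induction q using QuotientAddGroup.induction_on with | H b =>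
    obtain ⟨a, g, hg⟩ := hsurj b b.2
    refine ⟨a, (QuotientAddGroup.eq_iff_sub_mem ..).mpr ?_⟩
    exact AddSubgroup.mem_addSubgroupOf.mpr ⟨-g, by rw [map_neg, hg, neg_sub]; rfl⟩

/-- Telescoping `X_i X_{i+1} ⋯ X_{i+n−1}` gives `(X^n)_i = signTri (i + n) * signTri i`. -/
def signTri (i : ℤ) : ℤˣ := (i * (i - 1) / 2).negOnePow

theorem signTri_add_one (i : ℤ) : signTri (i + 1) = i.negOnePow * signTri i := by
  have h : (i + 1) * (i + 1 - 1) / 2 = i * (i - 1) / 2 + i := by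
    rw [← Int.add_mul_ediv_right _ _ two_ne_zero]; ring_nf
  rw [signTri, signTri, h, Int.negOnePow_add, mul_comm]

def xPowSign (n i : ℤ) : ℤˣ := signTri (i + n) * signTri i

theorem xPowSign_add (m n i : ℤ) : xPowSign (m + n) i = xPowSign m (i + n) * xPowSign n i := by
  simp only [xPowSign, add_comm m n, ← add_assoc]
  rw [mul_assoc, ← mul_assoc (signTri (i + n)), Int.units_mul_self, one_mul]

theorem xPowSign_zero_left (i : ℤ) : xPowSign 0 i = 1 := by
  simp [xPowSign, Int.units_mul_self]

theorem xPowSign_one_left (i : ℤ) : xPowSign 1 i = i.negOnePow := by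
  rw [xPowSign, signTri_add_one, mul_assoc, Int.units_mul_self, mul_one]

theorem xPowSign_neg_one_left (i : ℤ) : xPowSign (-1) i = (i + 1).negOnePow := by
  have h := signTri_add_one (i - 1)
  rw [sub_add_cancel] at h
  rw [xPowSign, ← sub_eq_add_neg, h, mul_left_comm, Int.units_mul_self, mul_one]
  exact (Int.negOnePow_eq_iff _ _).mpr ⟨-1, by ring⟩

theorem xPowSign_zero_right (n : ℤ) : xPowSign n 0 = signTri n := by
  simp [xPowSign, signTri]

theorem xPowSign_add_one_right (n i : ℤ) : xPowSign n (i + 1) = n.negOnePow * xPowSign n i := by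
  rw [xPowSign, add_right_comm, signTri_add_one, signTri_add_one, xPowSign, Int.negOnePow_add]
  conv_rhs => rw [← one_mul n.negOnePow, ← Int.units_mul_self i.negOnePow]
  ac_rfl

section EndP

variable (p : ℕ)

def xPow (n : ℤ) : EndPeps p n := fun i => ((xPowSign n i : ℤ) : DualNumber (ZMod p))

/-- The degree-`n` part `a ↦ a x^n` of the dga map `Z/p[x, y]/(xy − 1) → End(P)`. -/
def toEnd (n : ℤ) : ZMod p →+ EndPeps p n :=
  AddMonoidHom.mk' (· • xPow p n) fun a b => add_smul a b _

theorem fst_toEnd_apply (n : ℤ) (a : ZMod p) (i : ℤ) :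
    (toEnd p n a i).fst = a * ((xPowSign n i : ℤ) : ZMod p) := by
  simp [toEnd, xPow]

theorem toEnd_mul (m n : ℤ) (a b : ZMod p) :
    toEnd p (m + n) (a * b) = mulEps p n (toEnd p m a) (toEnd p n b) := by
  funext i
  simp only [toEnd, AddMonoidHom.mk'_apply, mulEps, Pi.smul_apply, xPow, xPowSign_add,
    smul_mul_smul_comm, Units.val_mul, Int.cast_mul]

theorem toEnd_zero_one : toEnd p 0 1 = fun _ => 1 := by
  funext i
  simp [toEnd, xPow, xPowSign_zero_left]

theorem toEnd_one_one : toEnd p 1 1 = XeE p := by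
  funext i
  simp [toEnd, xPow, xPowSign_one_left, XeE]

theorem toEnd_neg_one_one : toEnd p (-1) 1 = YeE p := by
  funext i
  simp [toEnd, xPow, xPowSign_neg_one_left, YeE]

theorem endEpsD_apply_eq_inr {n : ℤ} (f : EndPeps p n) (k : ℤ) :
    endEpsD p n f k =
      TrivSqZeroExt.inr ((f k).fst + ((n + 1).negOnePow : ℤ) * (f (k - 1)).fst) := by
  ext <;> simp [endEpsD]

theorem endEpsD_eq_zero_iff {n : ℤ} (f : EndPeps p n) :
    endEpsD p n f = 0 ↔ ∀ k, (f k).fst + ((n + 1).negOnePow : ℤ) * (f (k - 1)).fst = 0 := by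
  simp only [funext_iff, endEpsD_apply_eq_inr, Pi.zero_apply, ← TrivSqZeroExt.inr_zero,
    TrivSqZeroExt.inr_injective.eq_iff]

theorem exists_endEpsD_eq_iff {n : ℤ} (f : EndPeps p (n - 1)) :
    (∃ g, endEpsD p n g = f) ↔ ∀ k, (f k).fst = 0 := by
  refine ⟨fun ⟨g, hg⟩ k => by simp [← hg, endEpsD_apply_eq_inr], fun hf => ?_⟩
  obtain ⟨G, hG⟩ := exists_add_mul_sub_one_eq
    (isUnit_intCast_units (n + 1).negOnePow) fun k => (f k).snd
  refine ⟨fun k => TrivSqZeroExt.inl (G k), funext fun k => ?_⟩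
  rw [endEpsD_apply_eq_inr]
  ext
  · simp [hf]
  · simpa using hG k

theorem endEpsD_toEnd (n : ℤ) (a : ZMod p) : endEpsD p n (toEnd p n a) = 0 := by
  refine (endEpsD_eq_zero_iff p _).mpr fun k => ?_
  have h := xPowSign_add_one_right n (k - 1)
  rw [sub_add_cancel] at h
  simp only [fst_toEnd_apply, h, Int.negOnePow_succ]
  push_cast
  ring

theorem exists_endEpsD_eq_sub_toEnd {n : ℤ} (f : EndPeps p n) (hf : endEpsD p n f = 0) :
    ∃ a, ∃ g : EndPeps p (n + 1), endEpsD p (n + 1) g = f - toEnd p n a := by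
  set s : ZMod p := ((signTri n : ℤ) : ZMod p)
  have hs : s * s = 1 := by
    rw [← Int.cast_mul, ← Units.val_mul, Int.units_mul_self, Units.val_one, Int.cast_one]
  refine ⟨s * (f 0).fst, (exists_endEpsD_eq_iff p (n := n + 1) _).mpr ?_⟩
  have hcycle : endEpsD p n (f - toEnd p n (s * (f 0).fst)) = 0 := by
    rw [map_sub, hf, endEpsD_toEnd, sub_zero]
  refine eq_zero_of_add_mul_sub_one_eq_zero (isUnit_intCast_units (n + 1).negOnePow)
    ((endEpsD_eq_zero_iff p _).mp hcycle) ?_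
  rw [Pi.sub_apply, TrivSqZeroExt.fst_sub, fst_toEnd_apply, xPowSign_zero_right, mul_right_comm,
    hs, one_mul, sub_self]

theorem eq_zero_of_exists_endEpsD_eq_toEnd {n : ℤ} {a : ZMod p}
    (h : ∃ g : EndPeps p (n + 1), endEpsD p (n + 1) g = toEnd p n a) : a = 0 := by
  have h0 := (exists_endEpsD_eq_iff p (toEnd p n a)).mp h 0
  rwa [fst_toEnd_apply, xPowSign_zero_right, (isUnit_intCast_units _).mul_left_eq_zero] at h0

end EndP

theorem stmt12_general (p : ℕ) :
    (∃ Ψ : ∀ n : ℤ, ZMod p →+ EndPeps p n,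
      -- a map of graded rings (the degree-`n` part of `Aε` is `Z/p · x^n`):
      (∀ (m n : ℤ) (a b : ZMod p), Ψ (m + n) (a * b) = mulEps p n (Ψ m a) (Ψ n b)) ∧
      (Ψ 0 1 = fun _ => 1) ∧
      -- sending the generators `x`, `y` to `X`, `Y`:
      (Ψ 1 1 = XeE p) ∧ (Ψ (-1) 1 = YeE p) ∧
      -- commuting with the (trivial) differential:
      (∀ (n : ℤ) (a : ZMod p), endEpsD p n (Ψ n a) = 0) ∧
      -- surjective on homology:
      (∀ (n : ℤ) (f : EndPeps p n), endEpsD p n f = 0 →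
        ∃ a : ZMod p, ∃ g : EndPeps p (n + 1), endEpsD p (n + 1) g = f - Ψ n a) ∧
      -- injective on homology:
      (∀ (n : ℤ) (a : ZMod p),
        (∃ g : EndPeps p (n + 1), endEpsD p (n + 1) g = Ψ n a) → a = 0)) ∧
    -- in particular `H_n(End(P)) ≅ Z/p` for all `n`:
    (∀ n : ℤ, Nonempty
      (((endEpsD p n).ker ⧸ ((endEpsD p (n + 1)).range.addSubgroupOf (endEpsD p n).ker))
        ≃+ ZMod p)) :=
  ⟨⟨toEnd p, toEnd_mul p, toEnd_zero_one p, toEnd_one_one p, toEnd_neg_one_one p,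
      endEpsD_toEnd p, fun _ => exists_endEpsD_eq_sub_toEnd p,
      fun _ _ => eq_zero_of_exists_endEpsD_eq_toEnd p⟩,
    fun n => AddMonoidHom.nonempty_homology_addEquiv _ _ (toEnd p n) (endEpsD_toEnd p n)
      (exists_endEpsD_eq_sub_toEnd p) fun _ => eq_zero_of_exists_endEpsD_eq_toEnd p⟩

/-- The endomorphism dga `End(P)` is quasi-isomorphic to the formal dga
`Aε = Z/p[x, y]/(xy − 1)` with trivial differential, `|x| = 1`, `|y| = −1`: there is a
map of dgas `Aε → End(P)` with `x ↦ X`, `y ↦ Y` which is a quasi-isomorphism.  In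
particular `H_n(End(P)) ≅ Z/p` for all `n`. -/
theorem stmt12 (p : ℕ) [Fact p.Prime] :
    (∃ Ψ : ∀ n : ℤ, ZMod p →+ EndPeps p n,
      -- a map of graded rings (the degree-`n` part of `Aε` is `Z/p · x^n`):
      (∀ (m n : ℤ) (a b : ZMod p), Ψ (m + n) (a * b) = mulEps p n (Ψ m a) (Ψ n b)) ∧
      (Ψ 0 1 = fun _ => 1) ∧
      -- sending the generators `x`, `y` to `X`, `Y`:
      (Ψ 1 1 = XeE p) ∧ (Ψ (-1) 1 = YeE p) ∧
      -- commuting with the (trivial) differential: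
      (∀ (n : ℤ) (a : ZMod p), endEpsD p n (Ψ n a) = 0) ∧
      -- surjective on homology:
      (∀ (n : ℤ) (f : EndPeps p n), endEpsD p n f = 0 →
        ∃ a : ZMod p, ∃ g : EndPeps p (n + 1), endEpsD p (n + 1) g = f - Ψ n a) ∧
      -- injective on homology:
      (∀ (n : ℤ) (a : ZMod p),
        (∃ g : EndPeps p (n + 1), endEpsD p (n + 1) g = Ψ n a) → a = 0)) ∧
    -- in particular `H_n(End(P)) ≅ Z/p` for all `n`:
    (∀ n : ℤ, Nonempty
      (((endEpsD p n).ker ⧸ ((endEpsD p (n + 1)).range.addSubgroupOf (endEpsD p n).ker))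
        ≃+ ZMod p)) :=
  stmt12_general p
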